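/- arXiv:2410.23224 — 7 statements merged into one kernel-verified Lean document; each statement's English description precedes it below -/
import Mathlib

section
/- Let Γ be a group acting on the right by homeomorphisms on an infinite Hausdorff topological space X. Then the action is highly topologically transitive if and only if one of the following holds: (i) X is perfect (has no isolated points) and for every d ≥ 1 the diagonal action of Γ on the full product X^d is topologically transitive; or (ii) the set of isolated points of X is dense in X and the restriction of the action to the set of isolated points is highly transitive. -/
/-- A right action of a group `Γ` on a set `X`. -/
structure RightAct (Γ X : Type*) [Group Γ] where
  act : X → Γ → X
  act_one : ∀ x, act x 1 = x
  act_mul : ∀ (x : X) (γ δ : Γ), act x (γ * δ) = act (act x γ) δ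

/-- Topological transitivity of the diagonal action on the subspace `X^(d)` of `X^d`
consisting of `d`-tuples with pairwise distinct coordinates: open subsets of the subspace
are intersections of ambient open sets with the set of injective tuples. -/
def RightAct.dTT {Γ X : Type*} [Group Γ] [TopologicalSpace X]
    (a : RightAct Γ X) (d : ℕ) : Prop :=
  ∀ U V : Set (Fin d → X), IsOpen U → IsOpen V →
    (∃ x ∈ U, Function.Injective x) → (∃ y ∈ V, Function.Injective y) →
    ∃ γ : Γ, ∃ x ∈ U, Function.Injective x ∧
      (fun i => a.act (x i) γ) ∈ V ∧ Function.Injective (fun i => a.act (x i) γ)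

/-- Highly topologically transitive: `d`-topologically transitive for every `d ≥ 1`. -/
def RightAct.HTT {Γ X : Type*} [Group Γ] [TopologicalSpace X] (a : RightAct Γ X) : Prop :=
  ∀ d : ℕ, 1 ≤ d → a.dTT d

section Aux

open Set Function

variable {X : Type*} [TopologicalSpace X]

/-- Separate an injective finite tuple by pairwise disjoint open sets. -/
lemma sep_tuple [T2Space X] {d : ℕ} (x : Fin d → X) (hx : Injective x) :
    ∃ W : Fin d → Set X, (∀ i, IsOpen (W i)) ∧ (∀ i, x i ∈ W i) ∧
      ∀ i j, i ≠ j → Disjoint (W i) (W j) := by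
  obtain ⟨U, hU, hdisj⟩ := (Set.finite_range x).t2_separation
  refine ⟨fun i => U (x i), fun i => (hU (x i)).2, fun i => (hU (x i)).1, fun i j hij => ?_⟩
  exact hdisj (Set.mem_range_self i) (Set.mem_range_self j) (fun h => hij (hx h))

/-- A point of an open set of a finite product has a full open box inside the set. -/
lemma exists_box {d : ℕ} {U : Set (Fin d → X)} (hU : IsOpen U) {x : Fin d → X} (hx : x ∈ U) :
    ∃ u : Fin d → Set X, (∀ i, IsOpen (u i)) ∧ (∀ i, x i ∈ u i) ∧ Set.pi Set.univ u ⊆ U := by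
  obtain ⟨I, u, hu, hsub⟩ := isOpen_pi_iff.1 hU x hx
  refine ⟨fun i => if i ∈ I then u i else Set.univ, fun i => ?_, fun i => ?_, fun y hy => ?_⟩
  · simp only []; split_ifs with h
    · exact (hu i h).1
    · exact isOpen_univ
  · simp only []; split_ifs with h
    · exact (hu i h).2
    · trivial
  · apply hsub
    intro i hi
    have := hy i (Set.mem_univ i)
    simpa [Finset.mem_coe.1 hi] using this

/-- In a T1 space with no isolated points, nonempty open sets are infinite. -/
lemma open_infinite [T1Space X] [DecidableEq X] (hperf : ∀ x : X, ¬ IsOpen ({x} : Set X))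
    {U : Set X} (hU : IsOpen U) (hne : U.Nonempty) : U.Infinite := by
  intro hfin
  obtain ⟨x, hx⟩ := hne
  apply hperf x
  have : ({x} : Set X) = U ∩ (⋂ y ∈ (hfin.toFinset.erase x), ({y} : Set X)ᶜ) := by
    ext z
    simp only [Set.mem_singleton_iff, Set.mem_inter_iff, Set.mem_iInter, Set.mem_compl_iff,
      Finset.mem_erase, Set.Finite.mem_toFinset]
    constructor
    · rintro rfl
      exact ⟨hx, fun y hy h => hy.1 (h ▸ rfl)⟩
    · rintro ⟨hz, h⟩
      by_contra hne
      exact h z ⟨fun e => hne (by rw [e]), hz⟩ rfl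
  rw [this]
  exact hU.inter (isOpen_biInter_finset fun y _ => isOpen_compl_singleton)

-- Choose an injective tuple from a family of infinite sets.
omit [TopologicalSpace X] in
lemma inj_choice {d : ℕ} (u : Fin d → Set X) (hinf : ∀ i, (u i).Infinite) :
    ∃ y : Fin d → X, Injective y ∧ ∀ i, y i ∈ u i := by
  induction d with
  | zero => exact ⟨Fin.elim0, fun i => i.elim0, fun i => i.elim0⟩
  | succ n ih =>
    obtain ⟨y, hy, hmem⟩ := ih (fun i => u i.succ) (fun i => hinf i.succ)
    obtain ⟨z, hz, hznot⟩ : ∃ z ∈ u 0, z ∉ Set.range y := by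
      have := ((hinf 0).diff (Set.finite_range y)).nonempty
      obtain ⟨z, hz⟩ := this
      exact ⟨z, hz.1, hz.2⟩
    refine ⟨Fin.cons z y, Fin.cons_injective_of_injective hznot hy, fun i => ?_⟩
    refine Fin.cases ?_ ?_ i
    · simpa using hz
    · intro j; simpa using hmem j

lemma isolated_act {Γ X : Type*} [Group Γ] [TopologicalSpace X] (a : RightAct Γ X)
    (hcont : ∀ γ : Γ, Continuous fun x => a.act x γ) {q : X} (hq : IsOpen ({q} : Set X))
    (γ : Γ) : IsOpen ({a.act q γ} : Set X) := by
  have key : ({a.act q γ} : Set X) = (fun x => a.act x γ⁻¹) ⁻¹' {q} := by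
    ext z
    simp only [Set.mem_singleton_iff, Set.mem_preimage]
    constructor
    · rintro rfl
      rw [← a.act_mul, mul_inv_cancel, a.act_one]
    · intro h
      have := congrArg (fun w => a.act w γ) h
      simp only [← a.act_mul, inv_mul_cancel, a.act_one] at this
      exact this
  rw [key]; exact (hcont γ⁻¹).isOpen_preimage _ hq

end Aux

/-- An action by homeomorphisms on an infinite Hausdorff space is highly topologically
transitive iff either (i) the space is perfect and all diagonal actions on the full
products `X^d` are topologically transitive, or (ii) the set of isolated points is
dense and the restricted action on it is highly transitive. -/
theorem highlyTopTransitive_iff_perfect_or_isolated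
    {Γ X : Type*} [Group Γ] [TopologicalSpace X] [T2Space X] [Infinite X]
    (a : RightAct Γ X) (hcont : ∀ γ : Γ, Continuous fun x => a.act x γ) :
    a.HTT ↔
      (((∀ x : X, ¬ IsOpen ({x} : Set X)) ∧
        ∀ d : ℕ, 1 ≤ d → ∀ U V : Set (Fin d → X), IsOpen U → IsOpen V →
          U.Nonempty → V.Nonempty →
          ∃ γ : Γ, ∃ x ∈ U, (fun i => a.act (x i) γ) ∈ V)
      ∨
      (Dense {x : X | IsOpen ({x} : Set X)} ∧
        ∀ d : ℕ, 1 ≤ d → ∀ x y : Fin d → X,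
          (∀ i, IsOpen ({x i} : Set X)) → (∀ i, IsOpen ({y i} : Set X)) →
          Function.Injective x → Function.Injective y →
          ∃ γ : Γ, ∀ i, a.act (x i) γ = y i)) := by
  classical
  constructor
  · intro h
    by_cases hperf : ∀ x : X, ¬ IsOpen ({x} : Set X)
    · left
      refine ⟨hperf, fun d hd U V hU hV hUne hVne => ?_⟩
      -- find an injective tuple in U
      obtain ⟨x, hx⟩ := hUne
      obtain ⟨u, huo, hum, husub⟩ := exists_box hU hx
      obtain ⟨x', hx'inj, hx'mem⟩ :=
        inj_choice u (fun i => open_infinite hperf (huo i) ⟨x i, hum i⟩)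
      have hx'U : x' ∈ U := husub (fun i _ => hx'mem i)
      -- find an injective tuple in V
      obtain ⟨y, hy⟩ := hVne
      obtain ⟨v, hvo, hvm, hvsub⟩ := exists_box hV hy
      obtain ⟨y', hy'inj, hy'mem⟩ :=
        inj_choice v (fun i => open_infinite hperf (hvo i) ⟨y i, hvm i⟩)
      have hy'V : y' ∈ V := hvsub (fun i _ => hy'mem i)
      obtain ⟨γ, z, hzU, _, hzV, _⟩ :=
        h d hd U V hU hV ⟨x', hx'U, hx'inj⟩ ⟨y', hy'V, hy'inj⟩
      exact ⟨γ, z, hzU, hzV⟩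
    · right
      push_neg at hperf
      obtain ⟨p, hp⟩ := hperf
      constructor
      · -- density of isolated points
        rw [dense_iff_inter_open]
        intro W hW hWne
        have hUopen : IsOpen {f : Fin 1 → X | f 0 ∈ ({p} : Set X)} :=
          (continuous_apply 0).isOpen_preimage _ hp
        have hVopen : IsOpen {f : Fin 1 → X | f 0 ∈ W} :=
          (continuous_apply 0).isOpen_preimage _ hW
        obtain ⟨w, hw⟩ := hWne
        have hinj : ∀ f : Fin 1 → X, Function.Injective f :=
          fun f i j _ => Subsingleton.elim i j
        obtain ⟨γ, z, hzU, _, hzV, _⟩ := h 1 le_rfl _ _ hUopen hVopen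
          ⟨fun _ => p, rfl, hinj _⟩ ⟨fun _ => w, hw, hinj _⟩
        have hz0 : z 0 = p := hzU
        refine ⟨a.act p γ, hz0 ▸ hzV, isolated_act a hcont hp γ⟩
      · -- high transitivity on isolated points
        intro d hd x y hx hy hxinj hyinj
        have hUopen : IsOpen (Set.pi Set.univ (fun i => ({x i} : Set X))) :=
          isOpen_set_pi Set.finite_univ (fun i _ => hx i)
        have hVopen : IsOpen (Set.pi Set.univ (fun i => ({y i} : Set X))) :=
          isOpen_set_pi Set.finite_univ (fun i _ => hy i)
        obtain ⟨γ, z, hzU, _, hzV, _⟩ := h d hd _ _ hUopen hVopen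
          ⟨x, fun i _ => rfl, hxinj⟩ ⟨y, fun i _ => rfl, hyinj⟩
        refine ⟨γ, fun i => ?_⟩
        have hzx : z i = x i := hzU i (Set.mem_univ i)
        have := hzV i (Set.mem_univ i)
        simpa [hzx] using this
  · rintro (⟨hperf, htrans⟩ | ⟨hdense, hht⟩) <;> intro d hd U V hU hV ⟨x, hxU, hxinj⟩ ⟨y, hyV, hyinj⟩
    · -- case (i)
      obtain ⟨u, huo, hum, husub⟩ := exists_box hU hxU
      obtain ⟨W, hWo, hWm, hWd⟩ := sep_tuple x hxinj
      obtain ⟨v, hvo, hvm, hvsub⟩ := exists_box hV hyV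
      obtain ⟨W', hW'o, hW'm, hW'd⟩ := sep_tuple y hyinj
      obtain ⟨γ, z, hz, hzv⟩ := htrans d hd
        (Set.pi Set.univ (fun i => u i ∩ W i)) (Set.pi Set.univ (fun i => v i ∩ W' i))
        (isOpen_set_pi Set.finite_univ (fun i _ => (huo i).inter (hWo i)))
        (isOpen_set_pi Set.finite_univ (fun i _ => (hvo i).inter (hW'o i)))
        ⟨x, fun i _ => ⟨hum i, hWm i⟩⟩ ⟨y, fun i _ => ⟨hvm i, hW'm i⟩⟩
      have hzinj : Function.Injective z := by
        intro i j e
        by_contra hij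
        exact Set.disjoint_left.1 (hWd i j hij) (hz i (Set.mem_univ i)).2
          (e ▸ (hz j (Set.mem_univ j)).2)
      have hzγinj : Function.Injective (fun i => a.act (z i) γ) := by
        intro i j e
        by_contra hij
        exact Set.disjoint_left.1 (hW'd i j hij) (hzv i (Set.mem_univ i)).2
          (e ▸ (hzv j (Set.mem_univ j)).2)
      exact ⟨γ, z, husub (fun i _ => (hz i (Set.mem_univ i)).1), hzinj,
        hvsub (fun i _ => (hzv i (Set.mem_univ i)).1), hzγinj⟩
    · -- case (ii)
      obtain ⟨u, huo, hum, husub⟩ := exists_box hU hxU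
      obtain ⟨W, hWo, hWm, hWd⟩ := sep_tuple x hxinj
      obtain ⟨v, hvo, hvm, hvsub⟩ := exists_box hV hyV
      obtain ⟨W', hW'o, hW'm, hW'd⟩ := sep_tuple y hyinj
      have hpick : ∀ i : Fin d, ∃ p : X, p ∈ u i ∩ W i ∧ IsOpen ({p} : Set X) := by
        intro i
        obtain ⟨p, hp1, hp2⟩ := hdense.exists_mem_open ((huo i).inter (hWo i))
          ⟨x i, hum i, hWm i⟩
        exact ⟨p, hp2, hp1⟩
      have hqick : ∀ i : Fin d, ∃ q : X, q ∈ v i ∩ W' i ∧ IsOpen ({q} : Set X) := by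
        intro i
        obtain ⟨q, hq1, hq2⟩ := hdense.exists_mem_open ((hvo i).inter (hW'o i))
          ⟨y i, hvm i, hW'm i⟩
        exact ⟨q, hq2, hq1⟩
      choose p hpmem hpiso using hpick
      choose q hqmem hqiso using hqick
      have hpinj : Function.Injective p := by
        intro i j e
        by_contra hij
        exact Set.disjoint_left.1 (hWd i j hij) (hpmem i).2 (e ▸ (hpmem j).2)
      have hqinj : Function.Injective q := by
        intro i j e
        by_contra hij
        exact Set.disjoint_left.1 (hW'd i j hij) (hqmem i).2 (e ▸ (hqmem j).2)
      obtain ⟨γ, hγ⟩ := hht d hd p q hpiso hqiso hpinj hqinj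
      have heq : (fun i => a.act (p i) γ) = q := funext hγ
      refine ⟨γ, p, husub (fun i _ => (hpmem i).1), hpinj, ?_, ?_⟩
      · rw [heq]; exact hvsub (fun i _ => (hqmem i).1)
      · rw [heq]; exact hqinj
end

section
/- Let Γ be a group acting on the right by homeomorphisms on an infinite Hausdorff topological space X. Then the action is highly topologically transitive if and only if for every d ≥ 1 and every family U_1,…,U_{2d} of pairwise disjoint nonempty open subsets of X there exists γ ∈ Γ such that U_i·γ ∩ U_{i+d} ≠ ∅ for all i ∈ {1,…,d}. -/
/-- Right translation by a group element is an open map. -/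
lemma RightAct.isOpenMap_act {Γ X : Type*} [Group Γ] [TopologicalSpace X]
    (a : RightAct Γ X) (hcont : ∀ γ : Γ, Continuous fun x => a.act x γ) (γ : Γ) :
    IsOpenMap fun x => a.act x γ := by
  intro s hs
  have h : (fun x => a.act x γ) '' s = (fun x => a.act x γ⁻¹) ⁻¹' s := by
    ext y
    constructor
    · rintro ⟨u, hu, rfl⟩
      simpa [← a.act_mul, a.act_one] using hu
    · intro hy
      exact ⟨a.act y γ⁻¹, hy, by simp [← a.act_mul, a.act_one]⟩
  rw [h]
  exact hs.preimage (hcont γ⁻¹)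

/-- An action by homeomorphisms on an infinite Hausdorff space is highly topologically
transitive iff for every `d ≥ 1` and every family of `2d` pairwise disjoint nonempty
open sets `U₁, …, U_d, V₁, …, V_d` there is `γ` with `Uᵢ·γ ∩ Vᵢ ≠ ∅` for all `i`. -/
theorem highlyTopTransitive_iff_disjoint_opens
    {Γ X : Type*} [Group Γ] [TopologicalSpace X] [T2Space X] [Infinite X]
    (a : RightAct Γ X) (hcont : ∀ γ : Γ, Continuous fun x => a.act x γ) :
    a.HTT ↔
      ∀ d : ℕ, 1 ≤ d → ∀ U V : Fin d → Set X,
        (∀ i, IsOpen (U i)) → (∀ i, IsOpen (V i)) →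
        (∀ i, (U i).Nonempty) → (∀ i, (V i).Nonempty) →
        (∀ i j, i ≠ j → Disjoint (U i) (U j)) →
        (∀ i j, i ≠ j → Disjoint (V i) (V j)) →
        (∀ i j, Disjoint (U i) (V j)) →
        ∃ γ : Γ, ∀ i, ((fun x => a.act x γ) '' U i ∩ V i).Nonempty := by
  constructor
  · -- Forward direction
    intro h d hd U V hUo hVo hUne hVne hUU hVV _
    choose x hx using hUne
    choose y hy using hVne
    have hxinj : Function.Injective x := by
      intro i j hij
      by_contra hne
      exact Set.disjoint_left.mp (hUU i j hne) (hx i) (hij ▸ hx j)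
    have hyinj : Function.Injective y := by
      intro i j hij
      by_contra hne
      exact Set.disjoint_left.mp (hVV i j hne) (hy i) (hij ▸ hy j)
    obtain ⟨γ, z, hzU, _, hzV, _⟩ := h d hd (Set.univ.pi U) (Set.univ.pi V)
      (isOpen_set_pi Set.finite_univ fun i _ => hUo i)
      (isOpen_set_pi Set.finite_univ fun i _ => hVo i)
      ⟨x, fun i _ => hx i, hxinj⟩
      ⟨y, fun i _ => hy i, hyinj⟩
    exact ⟨γ, fun i => ⟨a.act (z i) γ, ⟨z i, hzU i (Set.mem_univ i), rfl⟩,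
      hzV i (Set.mem_univ i)⟩⟩
  · -- Backward direction
    intro h d hd U V hU hV hUx hVy
    obtain ⟨x, hxU, hxinj⟩ := hUx
    obtain ⟨y, hyV, hyinj⟩ := hVy
    obtain ⟨S, hS, hSU⟩ := isOpen_pi_iff'.mp hU x hxU
    obtain ⟨T, hT, hTV⟩ := isOpen_pi_iff'.mp hV y hyV
    -- choose auxiliary points z i outside the ranges of x and y
    set F : Set X := Set.range x ∪ Set.range y with hFdef
    have hF : F.Finite := (Set.finite_range x).union (Set.finite_range y)
    have hFc : Fᶜ.Infinite := hF.infinite_compl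
    let e := hFc.natEmbedding
    let z : Fin d → X := fun i => (e i.val : X)
    have hz_mem : ∀ i, z i ∈ Fᶜ := fun i => (e i.val).2
    have hzinj : Function.Injective z := by
      intro i j hij
      exact Fin.val_injective (e.injective (Subtype.ext hij))
    -- separate the points by pairwise disjoint open neighborhoods
    set P : Set X := F ∪ Set.range z with hPdef
    have hP : P.Finite := hF.union (Set.finite_range z)
    obtain ⟨N, hN, hNd⟩ := hP.t2_separation
    have hxP : ∀ i, x i ∈ P := fun i => Or.inl (Or.inl ⟨i, rfl⟩)
    have hyP : ∀ i, y i ∈ P := fun i => Or.inl (Or.inr ⟨i, rfl⟩)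
    have hzP : ∀ i, z i ∈ P := fun i => Or.inr ⟨i, rfl⟩
    have hzx : ∀ i j, z i ≠ x j := by
      intro i j hij
      exact hz_mem i (by rw [hij]; exact Or.inl ⟨j, rfl⟩)
    have hzy : ∀ i j, z i ≠ y j := by
      intro i j hij
      exact hz_mem i (by rw [hij]; exact Or.inr ⟨j, rfl⟩)
    have hNdisj : ∀ p ∈ P, ∀ q ∈ P, p ≠ q → Disjoint (N p) (N q) :=
      fun p hp q hq hpq => hNd hp hq hpq
    -- generic injectivity upgrade
    have injaux : ∀ (t w : Fin d → X), Function.Injective t → (∀ i, t i ∈ P) →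
        (∀ i, w i ∈ N (t i)) → Function.Injective w := by
      intro t w ht htP hw i j hij
      by_contra hne
      have hd2 := hNdisj _ (htP i) _ (htP j) (ht.ne hne)
      exact Set.disjoint_left.mp hd2 (hw i) (hij ▸ hw j)
    -- the shrunken families
    set U' : Fin d → Set X := fun i => S i ∩ N (x i) with hU'def
    set V' : Fin d → Set X := fun i => T i ∩ N (y i) with hV'def
    set W : Fin d → Set X := fun i => N (z i) with hWdef
    have hU'o : ∀ i, IsOpen (U' i) := fun i => (hS i).1.inter (hN (x i)).2
    have hV'o : ∀ i, IsOpen (V' i) := fun i => (hT i).1.inter (hN (y i)).2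
    have hWo : ∀ i, IsOpen (W i) := fun i => (hN (z i)).2
    have hU'ne : ∀ i, (U' i).Nonempty := fun i => ⟨x i, (hS i).2, (hN (x i)).1⟩
    have hV'ne : ∀ i, (V' i).Nonempty := fun i => ⟨y i, (hT i).2, (hN (y i)).1⟩
    have hWne : ∀ i, (W i).Nonempty := fun i => ⟨z i, (hN (z i)).1⟩
    have hU'U' : ∀ i j, i ≠ j → Disjoint (U' i) (U' j) := fun i j hij =>
      (hNdisj _ (hxP i) _ (hxP j) (hxinj.ne hij)).mono Set.inter_subset_right
        Set.inter_subset_right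
    have hV'V' : ∀ i j, i ≠ j → Disjoint (V' i) (V' j) := fun i j hij =>
      (hNdisj _ (hyP i) _ (hyP j) (hyinj.ne hij)).mono Set.inter_subset_right
        Set.inter_subset_right
    have hWW : ∀ i j, i ≠ j → Disjoint (W i) (W j) := fun i j hij =>
      hNdisj _ (hzP i) _ (hzP j) (hzinj.ne hij)
    have hU'W : ∀ i j, Disjoint (U' i) (W j) := fun i j =>
      (hNdisj _ (hxP i) _ (hzP j) (fun hh => hzx j i hh.symm)).mono
        Set.inter_subset_right le_rfl
    have hWV' : ∀ i j, Disjoint (W i) (V' j) := fun i j =>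
      (hNdisj _ (hzP i) _ (hyP j) (hzy i j)).mono le_rfl Set.inter_subset_right
    -- Step 1: move U' into W
    obtain ⟨γ₁, h₁⟩ := h d hd U' W hU'o hWo hU'ne hWne hU'U' hWW hU'W
    -- Step 2: move the image back into V'
    set U'' : Fin d → Set X := fun i => U' i ∩ (fun p => a.act p γ₁) ⁻¹' (W i) with hU''def
    have hU''o : ∀ i, IsOpen (U'' i) := fun i =>
      (hU'o i).inter ((hWo i).preimage (hcont γ₁))
    have hU''ne : ∀ i, (U'' i).Nonempty := by
      intro i
      obtain ⟨v, ⟨u, hu, rfl⟩, hvW⟩ := h₁ i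
      exact ⟨u, hu, hvW⟩
    set W' : Fin d → Set X := fun i => (fun p => a.act p γ₁) '' U'' i with hW'def
    have hW'o : ∀ i, IsOpen (W' i) := fun i =>
      a.isOpenMap_act hcont γ₁ _ (hU''o i)
    have hW'ne : ∀ i, (W' i).Nonempty := fun i => (hU''ne i).image _
    have hW'W : ∀ i, W' i ⊆ W i := by
      rintro i v ⟨u, hu, rfl⟩
      exact hu.2
    have hW'W' : ∀ i j, i ≠ j → Disjoint (W' i) (W' j) := fun i j hij =>
      (hWW i j hij).mono (hW'W i) (hW'W j)
    have hW'V' : ∀ i j, Disjoint (W' i) (V' j) := fun i j =>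
      (hWV' i j).mono (hW'W i) le_rfl
    obtain ⟨γ₂, h₂⟩ := h d hd W' V' hW'o hV'o hW'ne hV'ne hW'W' hV'V' hW'V'
    -- combine
    have key : ∀ i, ∃ u, u ∈ U' i ∧ a.act u (γ₁ * γ₂) ∈ V' i := by
      intro i
      obtain ⟨v, ⟨w, hw, rfl⟩, hvV⟩ := h₂ i
      obtain ⟨u, hu, rfl⟩ := hw
      exact ⟨u, hu.1, by rw [a.act_mul]; exact hvV⟩
    choose u hu1 hu2 using key
    refine ⟨γ₁ * γ₂, u, hSU (fun i _ => (hu1 i).1), ?_, hTV (fun i _ => (hu2 i).1), ?_⟩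
    · exact injaux x u hxinj hxP (fun i => (hu1 i).2)
    · exact injaux y _ hyinj hyP (fun i => (hu2 i).2)
end

section
/- Let Γ be a countable group. The set HT(Γ) of subgroups Λ ≤ Γ of infinite index such that the right-translation action of Γ on the coset space Λ\Γ is highly transitive is a G_δ subset of Sub(Γ). -/
/-!
Membership of a fixed element is a clopen condition in the Chabauty topology, hence so is any
equality `Λa = Λb` of cosets, as it means `b * a⁻¹ ∈ Λ`.
Infinite index means that for every `n` some `n` elements of `Γ` lie in distinct cosets: a
countable intersection of countable unions of clopen sets. High transitivity means that for
all tuples `x, y` of representatives, if both represent distinct cosets (a clopen condition)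
then some `γ` satisfies `Λ x_i γ = Λ y_i` for all `i` (an open condition). Since `Γ` is
countable, there are countably many tuples, so both sets are `Gδ`.
-/

/-- The Chabauty topology on the space of subgroups of `Γ`: the topology induced by the
injection `Sub(Γ) → {0,1}^Γ` (indicator functions), where `{0,1}^Γ` carries the product
of the discrete topologies. -/
instance chabauty (Γ : Type*) [Group Γ] : TopologicalSpace (Subgroup Γ) :=
  TopologicalSpace.induced (fun (H : Subgroup Γ) (g : Γ) => g ∈ H)
    (@Pi.topologicalSpace Γ (fun _ => Prop) (fun _ => ⊥))

/-- The space of right cosets `Λ\Γ`. -/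
def rQuot {Γ : Type*} [Group Γ] (Λ : Subgroup Γ) : Type _ :=
  Quotient (QuotientGroup.rightRel Λ)

/-- The right-translation action of `Γ` on the right coset space `Λ\Γ`:
`Λx · γ = Λxγ`. -/
def rAct {Γ : Type*} [Group Γ] (Λ : Subgroup Γ) (γ : Γ) : rQuot Λ → rQuot Λ :=
  Quotient.map' (fun x => x * γ) (by
    intro x y h
    rw [QuotientGroup.rightRel_apply] at h ⊢
    have key : y * γ * (x * γ)⁻¹ = y * x⁻¹ := by group
    rw [key]; exact h)

/-- The right-translation action of `Γ` on `Λ\Γ` is highly transitive: for every `d ≥ 1`,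
any `d`-tuple of pairwise distinct cosets can be mapped to any other by some `γ ∈ Γ`. -/
def HTcoset {Γ : Type*} [Group Γ] (Λ : Subgroup Γ) : Prop :=
  ∀ d : ℕ, 1 ≤ d → ∀ x y : Fin d → rQuot Λ,
    Function.Injective x → Function.Injective y →
    ∃ γ : Γ, ∀ i, rAct Λ γ (x i) = y i

/-- `HT(Γ)`: the set of infinite index subgroups `Λ ≤ Γ` whose right-translation action
on `Λ\Γ` is highly transitive. -/
def HTset (Γ : Type*) [Group Γ] : Set (Subgroup Γ) :=
  {Λ | Infinite (rQuot Λ) ∧ HTcoset Λ}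

theorem isOpen_setOf_imp {X : Type*} [TopologicalSpace X] {p q : X → Prop}
    (hp : IsClosed {x | p x}) (hq : IsOpen {x | q x}) : IsOpen {x | p x → q x} := by
  simp only [imp_iff_not_or]
  exact hp.isOpen_compl.union hq

theorem infinite_iff_forall_exists_injective_fin {α : Type*} :
    Infinite α ↔ ∀ n : ℕ, ∃ f : Fin n → α, Function.Injective f := by
  refine ⟨fun _ n => ⟨_, (Infinite.natEmbedding α).injective.comp Fin.val_injective⟩, fun h => ?_⟩
  by_contra hfin
  have := not_infinite_iff_finite.mp hfin
  obtain ⟨f, hf⟩ := h (Nat.card α + 1)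
  simpa using Nat.card_le_card_of_injective f hf

namespace rQuot

variable {Γ : Type*} [Group Γ] (Λ : Subgroup Γ)

def mk : Γ → rQuot Λ := Quotient.mk''

theorem mk_surjective : Function.Surjective (mk Λ) := Quotient.mk''_surjective

theorem mk_eq_mk {a b : Γ} : mk Λ a = mk Λ b ↔ b * a⁻¹ ∈ Λ :=
  Quotient.eq''.trans QuotientGroup.rightRel_apply

theorem rAct_mk (γ a : Γ) : rAct Λ γ (mk Λ a) = mk Λ (a * γ) := rfl

end rQuot

open rQuot

section

variable {Γ : Type*} [Group Γ]

theorem isClopen_setOf_mem (g : Γ) : IsClopen {Λ : Subgroup Γ | g ∈ Λ} := by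
  -- the global instance on `Prop` is the Sierpiński topology, not the discrete one used above
  let _ : TopologicalSpace Prop := ⊥
  have : DiscreteTopology Prop := ⟨rfl⟩
  have hcont : Continuous fun Λ : Subgroup Γ => g ∈ Λ :=
    (continuous_apply g).comp continuous_induced_dom
  exact (isClopen_discrete {p : Prop | p}).preimage hcont

theorem isClopen_setOf_mk_eq (a b : Γ) : IsClopen {Λ : Subgroup Γ | mk Λ a = mk Λ b} := by
  simpa only [mk_eq_mk] using isClopen_setOf_mem (b * a⁻¹)

theorem isClopen_setOf_injective_mk_comp {d : ℕ} (x : Fin d → Γ) :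
    IsClopen {Λ : Subgroup Γ | Function.Injective (mk Λ ∘ x)} := by
  simp only [Function.injective_iff_pairwise_ne, Pairwise, Function.onFun, Set.ofPred_forall]
  exact isClopen_iInter_of_finite fun i => isClopen_iInter_of_finite fun j =>
    isClopen_iInter_of_finite fun _ => (isClopen_setOf_mk_eq _ _).compl

theorem infinite_rQuot_iff (Λ : Subgroup Γ) :
    Infinite (rQuot Λ) ↔ ∀ n : ℕ, ∃ x : Fin n → Γ, Function.Injective (mk Λ ∘ x) := by
  simp only [infinite_iff_forall_exists_injective_fin, (mk_surjective Λ).comp_left.exists]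

theorem htCoset_iff (Λ : Subgroup Γ) :
    HTcoset Λ ↔ ∀ (d : ℕ) (x y : Fin d → Γ), Function.Injective (mk Λ ∘ x) →
      Function.Injective (mk Λ ∘ y) → ∃ γ : Γ, ∀ i, mk Λ (x i * γ) = mk Λ (y i) := by
  refine forall_congr' fun d => ?_
  rcases Nat.eq_zero_or_pos d with rfl | hd
  · simp
  rw [forall_prop_of_true (p := 1 ≤ d) hd]
  simp only [(mk_surjective Λ).comp_left.forall, Function.comp_apply, rAct_mk]

theorem isGδ_setOf_infinite_rQuot [Countable Γ] : IsGδ {Λ : Subgroup Γ | Infinite (rQuot Λ)} := by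
  simp only [infinite_rQuot_iff, Set.ofPred_forall, Set.ofPred_exists]
  exact .iInter fun n => (isOpen_iUnion fun x => (isClopen_setOf_injective_mk_comp x).isOpen).isGδ

theorem isGδ_setOf_htCoset [Countable Γ] : IsGδ {Λ : Subgroup Γ | HTcoset Λ} := by
  simp only [htCoset_iff, Set.ofPred_forall]
  refine .iInter fun d => .iInter fun x => .iInter fun y => IsOpen.isGδ ?_
  refine isOpen_setOf_imp (isClopen_setOf_injective_mk_comp x).isClosed
    (isOpen_setOf_imp (isClopen_setOf_injective_mk_comp y).isClosed ?_)
  simp only [Set.ofPred_exists, Set.ofPred_forall]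
  exact isOpen_iUnion fun γ => isOpen_iInter_of_finite fun i => (isClopen_setOf_mk_eq _ _).isOpen

end

/-- For a countable group `Γ`, the set `HT(Γ)` is a `Gδ` subset of `Sub(Γ)`. -/
theorem isGδ_HTset (Γ : Type*) [Group Γ] [Countable Γ] : IsGδ (HTset Γ) :=
  isGδ_setOf_infinite_rQuot.inter isGδ_setOf_htCoset
end

section
/- Let Γ be a countable group and let P ⊆ Sub(Γ) be a nonempty G_δ subset invariant under the conjugation action of Γ. Assume that (1) the set of Λ ∈ P of infinite index whose right coset action Λ\Γ ← Γ is highly transitive is dense in P, and (2) the conjugation action of Γ on P is topologically transitive. Then the conjugation action of Γ on P is highly topologically transitive. -/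
/-- The conjugation (right) action of `Γ` on its subgroups: `Λ · γ = γ⁻¹ Λ γ`. -/
def conjR {Γ : Type*} [Group Γ] (Λ : Subgroup Γ) (γ : Γ) : Subgroup Γ :=
  Λ.comap (MulAut.conj γ).toMonoidHom

section Topology

open Set Function

lemma Pairwise.injective_of_forall_mem {ι X : Type*} {u : ι → Set X}
    (hu : Pairwise (Disjoint on u)) {f : ι → X} (hf : ∀ i, f i ∈ u i) : Injective f := by
  intro i j hij
  by_contra hne
  exact disjoint_left.mp (hu hne) (hf i) (hij ▸ hf j)

lemma exists_pairwise_disjoint_pi_subset {ι X : Type*} [Finite ι] [TopologicalSpace X]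
    [T2Space X] {U : Set (ι → X)} (hU : IsOpen U) {x : ι → X} (hx : x ∈ U)
    (hinj : Injective x) :
    ∃ u : ι → Set X, (∀ i, IsOpen (u i) ∧ x i ∈ u i) ∧ Pairwise (Disjoint on u) ∧
      univ.pi u ⊆ U := by
  obtain ⟨u, hu, huU⟩ := isOpen_pi_iff'.mp hU x hx
  obtain ⟨S, hS, hSdisj⟩ := (finite_range x).t2_separation
  refine ⟨fun i => u i ∩ S (x i), fun i => ⟨(hu i).1.inter (hS _).2, (hu i).2, (hS _).1⟩,
    fun i j hij => ?_, (pi_mono fun i _ => inter_subset_left).trans huU⟩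
  exact (hSdisj (mem_range_self i) (mem_range_self j) (hinj.ne hij)).mono
    inter_subset_right inter_subset_right

lemma exists_isOpen_forall_act_mem {X G ι : Type*} [TopologicalSpace X] [Nonempty G]
    (act : X → G → X) (hact : ∀ g, Continuous (act · g)) {P : Set X} (hP : P.Nonempty)
    (htt : ∀ U V : Set X, IsOpen U → IsOpen V → (U ∩ P).Nonempty → (V ∩ P).Nonempty →
      ∃ g : G, ∃ x ∈ U ∩ P, act x g ∈ V ∩ P)
    {O : ι → Set X} (hO : ∀ i, IsOpen (O i)) (hOP : ∀ i, (O i ∩ P).Nonempty) (s : Finset ι) :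
    ∃ c : ι → G, ∃ W : Set X, IsOpen W ∧ (W ∩ P).Nonempty ∧
      ∀ x ∈ W, ∀ i ∈ s, act x (c i) ∈ O i := by
  classical
  induction s using Finset.induction_on with
  | empty => exact ⟨fun _ => Classical.arbitrary _, univ, isOpen_univ, by simpa using hP,
      by simp⟩
  | insert j s hj ih =>
    obtain ⟨c, W, hW, hWP, hc⟩ := ih
    obtain ⟨g, x, hx, hxg⟩ := htt W (O j) hW (hO j) hWP (hOP j)
    refine ⟨update c j g, W ∩ (act · g) ⁻¹' O j, hW.inter ((hO j).preimage (hact g)),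
      ⟨x, ⟨hx.1, hxg.1⟩, hx.2⟩, fun y hy i hi => ?_⟩
    rcases Finset.mem_insert.mp hi with rfl | hi
    · simpa using hy.2
    · rw [update_of_ne (ne_of_mem_of_not_mem hi hj)]
      exact hc y hy.1 i hi

end Topology

section Conjugation

variable {Γ : Type*} [Group Γ]

lemma mem_conjR {Λ : Subgroup Γ} {γ g : Γ} : g ∈ conjR Λ γ ↔ γ * g * γ⁻¹ ∈ Λ :=
  Iff.rfl

lemma conjR_conjR (Λ : Subgroup Γ) (a b : Γ) : conjR (conjR Λ a) b = conjR Λ (a * b) := by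
  ext g
  simp only [mem_conjR, mul_inv_rev, mul_assoc]

lemma conjR_of_mem {Λ : Subgroup Γ} {h : Γ} (hh : h ∈ Λ) : conjR Λ h = Λ := by
  ext g
  rw [mem_conjR, Subgroup.mul_mem_cancel_right _ (inv_mem hh),
    Subgroup.mul_mem_cancel_left _ hh]

lemma conjR_eq_of_mk_eq {Λ : Subgroup Γ} {a b : Γ}
    (h : (Quotient.mk'' a : rQuot Λ) = Quotient.mk'' b) : conjR Λ a = conjR Λ b := by
  have hba : b * a⁻¹ ∈ Λ := QuotientGroup.rightRel_apply.mp (Quotient.eq''.mp h)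
  calc conjR Λ a = conjR (conjR Λ (b * a⁻¹)) a := by rw [conjR_of_mem hba]
    _ = conjR Λ b := by rw [conjR_conjR, inv_mul_cancel_right]

lemma HTcoset.exists_conjR_eq {Λ : Subgroup Γ} (hΛ : HTcoset Λ) {d : ℕ} (hd : 1 ≤ d)
    {a b : Fin d → Γ} (ha : Function.Injective fun i => conjR Λ (a i))
    (hb : Function.Injective fun i => conjR Λ (b i)) :
    ∃ γ : Γ, ∀ i, conjR (conjR Λ (a i)) γ = conjR Λ (b i) := by
  obtain ⟨γ, hγ⟩ := hΛ d hd (fun i => Quotient.mk'' (a i)) (fun i => Quotient.mk'' (b i))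
    (fun i j hij => ha (conjR_eq_of_mk_eq hij)) (fun i j hij => hb (conjR_eq_of_mk_eq hij))
  exact ⟨γ, fun i => by rw [conjR_conjR]; exact conjR_eq_of_mk_eq (hγ i)⟩

lemma continuous_conjR (γ : Γ) : Continuous (conjR · γ : Subgroup Γ → Subgroup Γ) := by
  let _ : TopologicalSpace Prop := ⊥
  exact continuous_induced_rng.2 (continuous_pi fun g =>
    (continuous_apply (γ * g * γ⁻¹)).comp continuous_induced_dom)

instance : T2Space (Subgroup Γ) := by
  let _ : TopologicalSpace Prop := ⊥
  have : DiscreteTopology Prop := ⟨rfl⟩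
  exact T2Space.of_injective_continuous
    (fun H K h => Subgroup.ext fun g => by rw [congrFun h g]) continuous_induced_dom

lemma exists_mem_HTset_forall_conjR_mem {P : Set (Subgroup Γ)} (hP : P.Nonempty)
    (hdense : P ⊆ closure (HTset Γ ∩ P))
    (htt : ∀ U V : Set (Subgroup Γ), IsOpen U → IsOpen V →
      (U ∩ P).Nonempty → (V ∩ P).Nonempty →
      ∃ γ : Γ, ∃ Λ ∈ U ∩ P, conjR Λ γ ∈ V ∩ P)
    {ι : Type*} [Fintype ι] {O : ι → Set (Subgroup Γ)} (hO : ∀ i, IsOpen (O i))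
    (hOP : ∀ i, (O i ∩ P).Nonempty) :
    ∃ Λ ∈ HTset Γ ∩ P, ∃ c : ι → Γ, ∀ i, conjR Λ (c i) ∈ O i := by
  obtain ⟨c, W, hW, ⟨p, hpW, hpP⟩, hc⟩ :=
    exists_isOpen_forall_act_mem conjR continuous_conjR hP htt hO hOP Finset.univ
  obtain ⟨Λ, hΛW, hΛ⟩ := mem_closure_iff.mp (hdense hpP) W hW hpW
  exact ⟨Λ, hΛ, c, fun i => hc Λ hΛW i (Finset.mem_univ i)⟩

end Conjugation

theorem ht_and_tt_implies_htt_general (Γ : Type*) [Group Γ]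
    (P : Set (Subgroup Γ))
    (hinv : ∀ (Λ : Subgroup Γ) (γ : Γ), Λ ∈ P → conjR Λ γ ∈ P)
    (hdense : P ⊆ closure (HTset Γ ∩ P))
    (htt : ∀ U V : Set (Subgroup Γ), IsOpen U → IsOpen V →
      (U ∩ P).Nonempty → (V ∩ P).Nonempty →
      ∃ γ : Γ, ∃ Λ ∈ U ∩ P, conjR Λ γ ∈ V ∩ P) :
    ∀ d : ℕ, 1 ≤ d → ∀ U V : Set (Fin d → Subgroup Γ), IsOpen U → IsOpen V →
      (∃ x ∈ U, Function.Injective x ∧ ∀ i, x i ∈ P) →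
      (∃ y ∈ V, Function.Injective y ∧ ∀ i, y i ∈ P) →
      ∃ γ : Γ, ∃ x ∈ U, Function.Injective x ∧ (∀ i, x i ∈ P) ∧
        (fun i => conjR (x i) γ) ∈ V ∧
        Function.Injective (fun i => conjR (x i) γ) ∧ (∀ i, conjR (x i) γ ∈ P) := by
  rintro d hd U V hU hV ⟨x, hxU, hxinj, hxP⟩ ⟨y, hyV, hyinj, hyP⟩
  obtain ⟨u, hu, hudisj, huU⟩ := exists_pairwise_disjoint_pi_subset hU hxU hxinj
  obtain ⟨v, hv, hvdisj, hvV⟩ := exists_pairwise_disjoint_pi_subset hV hyV hyinj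
  obtain ⟨Λ, ⟨⟨-, hΛ⟩, hΛP⟩, c, hc⟩ := exists_mem_HTset_forall_conjR_mem (O := Sum.elim u v)
    ⟨x ⟨0, hd⟩, hxP _⟩ hdense htt (Sum.forall.2 ⟨fun i => (hu i).1, fun i => (hv i).1⟩)
    (Sum.forall.2 ⟨fun i => ⟨x i, (hu i).2, hxP i⟩, fun i => ⟨y i, (hv i).2, hyP i⟩⟩)
  have ha : ∀ i, conjR Λ (c (.inl i)) ∈ u i := fun i => hc (.inl i)
  have hb : ∀ i, conjR Λ (c (.inr i)) ∈ v i := fun i => hc (.inr i)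
  obtain ⟨γ, hγ⟩ := hΛ.exists_conjR_eq hd (hudisj.injective_of_forall_mem ha)
    (hvdisj.injective_of_forall_mem hb)
  refine ⟨γ, _, huU fun i _ => ha i, hudisj.injective_of_forall_mem ha,
    fun i => hinv _ _ hΛP, ?_, ?_, fun i => hinv _ _ (hinv _ _ hΛP)⟩ <;> simp only [hγ]
  · exact hvV fun i _ => hb i
  · exact hvdisj.injective_of_forall_mem hb

/-- HT + TT ⟹ HTT: if `P ⊆ Sub(Γ)` is a nonempty `Γ`-invariant `Gδ` set in which the
highly transitive subgroups are dense, and if the conjugation action of `Γ` on `P` is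
topologically transitive, then the conjugation action of `Γ` on `P` is highly
topologically transitive (the conclusion unfolds topological transitivity of the
diagonal action on the subspace of `d`-tuples of pairwise distinct points of `P`). -/
theorem ht_and_tt_implies_htt (Γ : Type*) [Group Γ] [Countable Γ]
    (P : Set (Subgroup Γ)) (hne : P.Nonempty) (hGδ : IsGδ P)
    (hinv : ∀ (Λ : Subgroup Γ) (γ : Γ), Λ ∈ P → conjR Λ γ ∈ P)
    (hdense : P ⊆ closure (HTset Γ ∩ P))
    (htt : ∀ U V : Set (Subgroup Γ), IsOpen U → IsOpen V →
      (U ∩ P).Nonempty → (V ∩ P).Nonempty →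
      ∃ γ : Γ, ∃ Λ ∈ U ∩ P, conjR Λ γ ∈ V ∩ P) :
    ∀ d : ℕ, 1 ≤ d → ∀ U V : Set (Fin d → Subgroup Γ), IsOpen U → IsOpen V →
      (∃ x ∈ U, Function.Injective x ∧ ∀ i, x i ∈ P) →
      (∃ y ∈ V, Function.Injective y ∧ ∀ i, y i ∈ P) →
      ∃ γ : Γ, ∃ x ∈ U, Function.Injective x ∧ (∀ i, x i ∈ P) ∧
        (fun i => conjR (x i) γ) ∈ V ∧
        Function.Injective (fun i => conjR (x i) γ) ∧ (∀ i, conjR (x i) γ ∈ P) :=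
  ht_and_tt_implies_htt_general Γ P hinv hdense htt
end

section
/- Let Γ be a countable group. A subgroup Λ ≤ Γ gives rise to a highly faithful coset action Λ\Γ ← Γ if and only if the closure in Sub(Γ) of the conjugacy class {γ^{-1}Λγ : γ ∈ Γ} contains the trivial subgroup {1}. Moreover, the set of subgroups Λ ≤ Γ whose coset action Λ\Γ ← Γ is highly faithful is a G_δ subset of Sub(Γ). -/
/-- The right-translation action of `Γ` on `Λ\Γ` is highly faithful: for every finite
`F ⊆ Γ ∖ {1}` there is a coset moved by every element of `F`. -/
def HFcoset {Γ : Type*} [Group Γ] (Λ : Subgroup Γ) : Prop :=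
  ∀ F : Finset Γ, (∀ γ ∈ F, γ ≠ 1) → ∃ x : rQuot Λ, ∀ γ ∈ F, rAct Λ γ x ≠ x

/-! The stabiliser of the coset `Λg` is the conjugate `g⁻¹Λg`, so a coset moved by every element
of a finite `F ⊆ Γ ∖ {1}` is the same as a conjugate of `Λ` avoiding `F`. The subgroups avoiding
such an `F` form a basis of Chabauty neighbourhoods of `{1}`, which gives the closure criterion;
and the same description exhibits the highly faithful subgroups as the countable intersection,
over `F`, of the open sets `⋃ g, {Λ | g⁻¹Λg ∩ F = ∅}`. -/

open Topology

namespace Subgroup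

variable {Γ : Type*} [Group Γ]

lemma isOpen_setOf_notMem (g : Γ) : IsOpen {H : Subgroup Γ | g ∉ H} := by
  -- `chabauty` uses the discrete topology on `Prop`, not the Sierpiński instance.
  let _ : TopologicalSpace Prop := ⊥
  have : DiscreteTopology Prop := ⟨rfl⟩
  have hcont : Continuous fun H : Subgroup Γ => g ∈ H :=
    (continuous_apply g).comp continuous_induced_dom
  exact (isOpen_discrete {p : Prop | ¬p}).preimage hcont

lemma isOpen_setOf_forall_notMem (F : Finset Γ) :
    IsOpen {H : Subgroup Γ | ∀ γ ∈ F, γ ∉ H} := by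
  simpa only [Set.ofPred_forall] using isOpen_biInter_finset fun γ _ => isOpen_setOf_notMem γ

lemma nhds_bot_hasBasis :
    (𝓝 (⊥ : Subgroup Γ)).HasBasis (fun F : Finset Γ => ∀ γ ∈ F, γ ≠ 1)
      (fun F => {H | ∀ γ ∈ F, γ ∉ H}) := by
  refine (nhds_basis_opens _).to_hasBasis (fun o ⟨hbot, ho⟩ => ?_)
    fun F hF => ⟨_, ⟨fun γ hγ => by simpa using hF γ hγ, isOpen_setOf_forall_notMem F⟩,
      subset_rfl⟩
  classical
  let _ : TopologicalSpace Prop := ⊥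
  obtain ⟨t, ht, rfl⟩ := isOpen_induced_iff.mp ho
  obtain ⟨I, u, hu, hIu⟩ := isOpen_pi_iff.mp ht _ hbot
  refine ⟨I.filter (· ≠ 1), fun γ hγ => (Finset.mem_filter.mp hγ).2, fun H hH => hIu ?_⟩
  intro γ hγ
  have hagree : (γ ∈ H) = (γ ∈ (⊥ : Subgroup Γ)) := by
    by_cases h1 : γ = 1
    · simp [h1]
    · simp [hH γ (Finset.mem_filter.mpr ⟨hγ, h1⟩), h1]
  change (γ ∈ H) ∈ u γ
  exact hagree ▸ (hu γ hγ).2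

lemma bot_mem_closure_iff {C : Set (Subgroup Γ)} :
    (⊥ : Subgroup Γ) ∈ _root_.closure C ↔
      ∀ F : Finset Γ, (∀ γ ∈ F, γ ≠ 1) → ∃ H ∈ C, ∀ γ ∈ F, γ ∉ H :=
  mem_closure_iff_nhds_basis nhds_bot_hasBasis

end Subgroup

section CosetAction

variable {Γ : Type*} [Group Γ]

lemma mem_conjR_iff {Λ : Subgroup Γ} {g γ : Γ} : γ ∈ conjR Λ g ↔ g * γ * g⁻¹ ∈ Λ :=
  Iff.rfl

lemma continuous_conjR_s7 (g : Γ) : Continuous fun Λ : Subgroup Γ => conjR Λ g := by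
  let _ : TopologicalSpace Prop := ⊥
  refine continuous_induced_rng.mpr (continuous_pi fun γ => ?_)
  exact (continuous_apply (g * γ * g⁻¹)).comp continuous_induced_dom

lemma rAct_mk_eq_iff {Λ : Subgroup Γ} {γ g : Γ} :
    rAct Λ γ (Quotient.mk'' g) = Quotient.mk'' g ↔ γ ∈ conjR Λ g := by
  change Quotient.mk'' (g * γ) = Quotient.mk'' g ↔ _
  rw [Quotient.eq'', QuotientGroup.rightRel_apply, mem_conjR_iff, ← Λ.inv_mem_iff]
  simp only [mul_inv_rev, inv_inv, mul_assoc]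

lemma hFcoset_iff {Λ : Subgroup Γ} :
    HFcoset Λ ↔ ∀ F : Finset Γ, (∀ γ ∈ F, γ ≠ 1) → ∃ g : Γ, ∀ γ ∈ F, γ ∉ conjR Λ g := by
  refine forall₂_congr fun F _ => ⟨fun ⟨x, hx⟩ => ?_, fun ⟨g, hg⟩ => ?_⟩
  · obtain ⟨g, rfl⟩ := Quotient.exists_rep x
    exact ⟨g, fun γ hγ hmem => hx γ hγ (rAct_mk_eq_iff.mpr hmem)⟩
  · exact ⟨Quotient.mk'' g, fun γ hγ hfix => hg γ hγ (rAct_mk_eq_iff.mp hfix)⟩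

lemma hFcoset_iff_bot_mem_closure (Λ : Subgroup Γ) :
    HFcoset Λ ↔ (⊥ : Subgroup Γ) ∈ closure {H : Subgroup Γ | ∃ γ : Γ, H = conjR Λ γ} := by
  simp [hFcoset_iff, Subgroup.bot_mem_closure_iff]

lemma setOf_hFcoset_eq :
    {Λ : Subgroup Γ | HFcoset Λ} =
      ⋂ F : {F : Finset Γ // ∀ γ ∈ F, γ ≠ 1}, ⋃ g : Γ,
        (conjR · g) ⁻¹' {H | ∀ γ ∈ F.1, γ ∉ H} := by
  ext Λ
  simp [hFcoset_iff]

lemma isGδ_setOf_hFcoset [Countable Γ] : IsGδ {Λ : Subgroup Γ | HFcoset Λ} := by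
  rw [setOf_hFcoset_eq]
  exact .iInter fun F => (isOpen_iUnion fun g =>
    (Subgroup.isOpen_setOf_forall_notMem F.1).preimage (continuous_conjR_s7 g)).isGδ

end CosetAction

/-- A subgroup `Λ ≤ Γ` has highly faithful coset action iff the closure of its conjugacy
class in `Sub(Γ)` contains the trivial subgroup; moreover the set of subgroups with
highly faithful coset action is a `Gδ` subset of `Sub(Γ)`. -/
theorem highlyFaithful_iff_and_isGδ (Γ : Type*) [Group Γ] [Countable Γ] :
    (∀ Λ : Subgroup Γ,
      HFcoset Λ ↔ (⊥ : Subgroup Γ) ∈ closure {H : Subgroup Γ | ∃ γ : Γ, H = conjR Λ γ}) ∧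
    IsGδ {Λ : Subgroup Γ | HFcoset Λ} :=
  ⟨hFcoset_iff_bot_mem_closure, isGδ_setOf_hFcoset⟩
end

section
/- Let m, n be integers with |m| = |n| ≥ 2. Then BS(m,n) admits no primitive transitive action of infinite phenotype: every transitive action of BS(m,n) on a set X in which every orbit of the cyclic subgroup ⟨b⟩ is infinite fails to be primitive. -/
/-- The single Baumslag–Solitar relator `t b^m t⁻¹ b^{-n}` in the free group on two
generators (`false ↦ b`, `true ↦ t`). -/
def BSrel (m n : ℤ) : Set (FreeGroup Bool) :=
  {FreeGroup.of true * FreeGroup.of false ^ m * (FreeGroup.of true)⁻¹ *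
    (FreeGroup.of false ^ n)⁻¹}

/-- The Baumslag–Solitar group `BS(m,n) = ⟨b, t ∣ t b^m t⁻¹ = b^n⟩`. -/
abbrev BS (m n : ℤ) : Type := PresentedGroup (BSrel m n)

/-- The generator `b` of `BS(m,n)`. -/
def bGen (m n : ℤ) : BS m n := PresentedGroup.of false

/-- The generator `t` of `BS(m,n)`. -/
def tGen (m n : ℤ) : BS m n := PresentedGroup.of true

/-- The `(m,n)`-phenotype of a positive integer `L`: the product over all primes `p`
with `v_p(m) = v_p(n) < v_p(L)` of `p^{v_p(L)}` (valuations taken on absolute values). -/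
def Phe (m n : ℤ) (L : ℕ) : ℕ :=
  L.factorization.prod fun p e =>
    if m.natAbs.factorization p = n.natAbs.factorization p ∧ n.natAbs.factorization p < e
    then p ^ e else 1

/-- The orbit of a point `x` under the cyclic subgroup `⟨b⟩` of `BS(m,n)`. -/
def bOrbit (m n : ℤ) {X : Type*} [MulAction (BS m n) X] (x : X) : Set X :=
  {y | ∃ k : ℤ, bGen m n ^ k • x = y}

lemma bs_rel (m n : ℤ) : tGen m n * bGen m n ^ m * (tGen m n)⁻¹ = bGen m n ^ n := by
  have h : (QuotientGroup.mk (FreeGroup.of true * FreeGroup.of false ^ m *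
      (FreeGroup.of true)⁻¹ * (FreeGroup.of false ^ n)⁻¹) : BS m n) = 1 := by
    rw [QuotientGroup.eq_one_iff]
    exact Subgroup.subset_normalClosure rfl
  have := h
  simp only [QuotientGroup.mk_mul, QuotientGroup.mk_inv, QuotientGroup.mk_zpow] at this
  have h2 : tGen m n * bGen m n ^ m * (tGen m n)⁻¹ * (bGen m n ^ n)⁻¹ = 1 := this
  exact mul_inv_eq_one.mp h2

lemma bs_closure (m n : ℤ) :
    Subgroup.closure (Set.range (PresentedGroup.of : Bool → BS m n)) = ⊤ :=
  PresentedGroup.closure_range_of _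

lemma conj_bm (m n : ℤ) (heq : m.natAbs = n.natAbs) (γ : BS m n) :
    γ * bGen m n ^ m * γ⁻¹ = bGen m n ^ m ∨
    γ * bGen m n ^ m * γ⁻¹ = (bGen m n ^ m)⁻¹ := by
  set b : BS m n := bGen m n ^ m with hb
  have hmem : γ ∈ Subgroup.closure (Set.range (PresentedGroup.of : Bool → BS m n)) := by
    rw [bs_closure]; trivial
  induction hmem using Subgroup.closure_induction with
  | mem g hg =>
    obtain ⟨c, rfl⟩ := hg
    cases c with
    | false =>
      left
      have : Commute (bGen m n) b := (Commute.refl (bGen m n)).zpow_right m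
      show bGen m n * b * (bGen m n)⁻¹ = b
      rw [this.eq]; group
    | true =>
      have hrel : tGen m n * b * (tGen m n)⁻¹ = bGen m n ^ n := bs_rel m n
      rcases Int.natAbs_eq_natAbs_iff.mp heq with h | h
      · left
        have e : bGen m n ^ n = b := congrArg (fun z => bGen m n ^ z) h.symm
        show tGen m n * b * (tGen m n)⁻¹ = b
        rw [hrel, e]
      · right
        have hn : n = -m := by omega
        have e : bGen m n ^ n = b⁻¹ := by
          simpa [zpow_neg] using congrArg (fun z => bGen m n ^ z) hn
        show tGen m n * b * (tGen m n)⁻¹ = b⁻¹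
        rw [hrel, e]
  | one => left; group
  | mul g₁ g₂ _ _ ih1 ih2 =>
    have key : (g₁ * g₂) * b * (g₁ * g₂)⁻¹ = g₁ * (g₂ * b * g₂⁻¹) * g₁⁻¹ := by group
    have inv_case : ∀ g : BS m n, g * b * g⁻¹ = b⁻¹ → g * b⁻¹ * g⁻¹ = (g * b * g⁻¹)⁻¹ := by
      intro g _; group
    rcases ih2 with h2 | h2
    · rw [key, h2]; exact ih1
    · rw [key, h2]
      rcases ih1 with h1 | h1
      · right
        have : g₁ * b⁻¹ * g₁⁻¹ = (g₁ * b * g₁⁻¹)⁻¹ := by group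
        rw [this, h1]
      · left
        have : g₁ * b⁻¹ * g₁⁻¹ = (g₁ * b * g₁⁻¹)⁻¹ := by group
        rw [this, h1, inv_inv]
  | inv g _ ih =>
    have e : g⁻¹ * (g * b * g⁻¹) * g = b := by group
    rcases ih with h | h
    · left
      rw [h] at e
      rw [inv_inv]
      exact e
    · right
      rw [h] at e
      rw [inv_inv]
      calc g⁻¹ * b * g = (g⁻¹ * b⁻¹ * g)⁻¹ := by group
        _ = b⁻¹ := by rw [e]


lemma finite_bOrbit (m n : ℤ) {X : Type*} [MulAction (BS m n) X] (x : X)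
    (d : ℤ) (hd : d ≠ 0) (hfix : bGen m n ^ d • x = x) : (bOrbit m n x).Finite := by
  have hc : (0:ℤ) < |d| := abs_pos.mpr hd
  have hfix' : bGen m n ^ |d| • x = x := by
    rcases abs_choice d with h | h
    · rw [h]; exact hfix
    · rw [h, zpow_neg]
      exact inv_smul_eq_iff.mpr hfix.symm
  have hst : bGen m n ^ |d| ∈ MulAction.stabilizer (BS m n) x := hfix'
  have hq : ∀ q : ℤ, bGen m n ^ (|d| * q) • x = x := by
    intro q
    rw [zpow_mul]
    exact Subgroup.zpow_mem _ hst q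
  have hsub : bOrbit m n x ⊆ (fun r : ℤ => bGen m n ^ r • x) '' Set.Ico 0 |d| := by
    rintro y ⟨k, rfl⟩
    refine ⟨k % |d|, ⟨Int.emod_nonneg k (ne_of_gt hc), Int.emod_lt_of_pos k hc⟩, ?_⟩
    have hk : |d| * (k / |d|) + k % |d| = k := Int.mul_ediv_add_emod k |d|
    calc bGen m n ^ (k % |d|) • x
        = bGen m n ^ (k % |d|) • (bGen m n ^ (|d| * (k / |d|)) • x) := by rw [hq]
      _ = bGen m n ^ (k % |d| + |d| * (k / |d|)) • x := by rw [← mul_smul, ← zpow_add]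
      _ = bGen m n ^ k • x := by rw [add_comm, hk]
  exact ((Set.finite_Ico 0 |d|).image _).subset hsub

/-- When `|m| = |n| ≥ 2`, the group `BS(m,n)` has no primitive transitive action of
infinite phenotype: every transitive action in which all `⟨b⟩`-orbits are infinite
admits an invariant equivalence relation which is neither equality nor the full
relation. -/
theorem not_primitive_of_infinite_phenotype_eq_case (m n : ℤ)
    (heq : m.natAbs = n.natAbs) (h2 : 2 ≤ m.natAbs)
    (X : Type*) [Nonempty X] [MulAction (BS m n) X]
    (htrans : ∀ x y : X, ∃ γ : BS m n, γ • x = y)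
    (horb : ∀ x : X, (bOrbit m n x).Infinite) :
    ∃ r : X → X → Prop, Equivalence r ∧
      (∀ (γ : BS m n) (x y : X), r x y → r (γ • x) (γ • y)) ∧
      (∃ x y, x ≠ y ∧ r x y) ∧ (∃ x y, ¬ r x y) := by
  have hm : m ≠ 0 := by
    intro h; rw [h] at h2; simp at h2
  refine ⟨fun x y => ∃ k : ℤ, bGen m n ^ (m * k) • x = y, ⟨?_, ?_, ?_⟩, ?_, ?_, ?_⟩
  · intro x; exact ⟨0, by simp⟩
  · rintro x y ⟨k, rfl⟩
    exact ⟨-k, by rw [← mul_smul, ← zpow_add]; norm_num⟩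
  · rintro x y z ⟨k₁, rfl⟩ ⟨k₂, rfl⟩
    refine ⟨k₁ + k₂, ?_⟩
    rw [← mul_smul, ← zpow_add]
    ring_nf
  · rintro γ x y ⟨k, rfl⟩
    rcases conj_bm m n heq γ with h | h
    · refine ⟨k, ?_⟩
      have e : γ * bGen m n ^ (m * k) * γ⁻¹ = bGen m n ^ (m * k) := by
        rw [zpow_mul, ← conj_zpow, h]
      conv_lhs => rw [← e]
      rw [mul_smul, mul_smul, inv_smul_smul]
    · refine ⟨-k, ?_⟩
      have e : γ * bGen m n ^ (m * k) * γ⁻¹ = bGen m n ^ (m * (-k)) := by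
        rw [zpow_mul, zpow_mul, ← conj_zpow, h, inv_zpow, ← zpow_neg]
      conv_lhs => rw [← e]
      rw [mul_smul, mul_smul, inv_smul_smul]
  · obtain ⟨x⟩ := ‹Nonempty X›
    refine ⟨x, bGen m n ^ (m * 1) • x, ?_, ⟨1, rfl⟩⟩
    intro hxy
    exact horb x (finite_bOrbit m n x (m * 1) (by simpa using hm) hxy.symm)
  · obtain ⟨x⟩ := ‹Nonempty X›
    refine ⟨x, bGen m n • x, ?_⟩
    rintro ⟨k, hk⟩
    have hfix : bGen m n ^ (m * k - 1) • x = x := by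
      have : bGen m n ^ (m * k - 1) = (bGen m n)⁻¹ * bGen m n ^ (m * k) := by
        rw [← zpow_neg_one, ← zpow_add]
        ring_nf
      rw [this, mul_smul, hk, inv_smul_smul]
    have hne : m * k - 1 ≠ 0 := by
      intro h
      have : m * k = 1 := by omega
      have := congrArg Int.natAbs this
      rw [Int.natAbs_mul] at this
      have h6 : m.natAbs ∣ 1 := ⟨k.natAbs, by simpa using this.symm⟩
      have := Nat.le_of_dvd one_pos h6
      omega
    exact horb x (finite_bOrbit m n x _ hne hfix)
end

section
/- Let m, n be integers with |m| ≥ 2 and |n| ≥ 2, and let q ≥ 1 be a finite (m,n)-phenotype, i.e. every prime p dividing q satisfies v_p(m) = v_p(n) < v_p(q). Let (l_j)_{j ≥ 0} be a sequence of positive integers such that: (i) for every prime p with v_p(m) < v_p(n), v_p(l_0) = v_p(m); (ii) for every prime p with v_p(m) = v_p(n), v_p(l_0) = max(v_p(q), v_p(m)); and (iii) for every j ≥ 0, l_{j+1} is the smallest positive integer satisfying l_{j+1} / gcd(l_{j+1}, |n|) = l_j / gcd(l_j, |m|). Then there exists a rank r such that l_j = q for all j ≥ r. -/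
/-!
Comparing `p`-adic valuations, the least solution `L` of `L / gcd(L, N) = t` has `v_p(L) = 0`
when `p ∤ t` and `v_p(L) = v_p(t) + v_p(N)` otherwise, since a surplus factor `p` could be
removed to give a smaller solution. Hence every valuation `v_p(l_j)` evolves independently under
`x ↦ 0` for `x ≤ v_p(m)` and `x ↦ x - v_p(m) + v_p(n)` for `x > v_p(m)`. If `v_p(m) < v_p(n)`
or `p ∤ q`, the initial conditions give `v_p(l_0) ≤ v_p(m)`, so the valuation vanishes from step
one on; if `v_p(m) = v_p(n) < v_p(q)` it stays at `v_p(q)`; if `v_p(m) > v_p(n)` it drops by at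
least one per step until it vanishes, which takes at most `v_p(l_0) < l_0` steps.
-/

namespace Nat

theorem factorization_div_gcd {k N : ℕ} (hk : k ≠ 0) (hN : N ≠ 0) :
    (k / k.gcd N).factorization = k.factorization - N.factorization := by
  ext p
  rw [factorization_div (gcd_dvd_left k N), factorization_gcd hk hN]
  simp only [Finsupp.tsub_apply, Finsupp.inf_apply]
  omega

theorem div_prime_div_gcd_eq {k N p : ℕ} (hp : p.Prime) (hk : 0 < k) (hN : N ≠ 0) (hpk : p ∣ k)
    (hkN : k.factorization p ≤ N.factorization p) :
    k / p / (k / p).gcd N = k / k.gcd N := by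
  have hkp : 0 < k / p := Nat.div_pos (Nat.le_of_dvd hk hpk) hp.pos
  refine eq_of_factorization_eq (div_gcd_pos_of_pos_left N hkp).ne'
    (div_gcd_pos_of_pos_left N hk).ne' fun r => ?_
  rw [factorization_div_gcd hkp.ne' hN, factorization_div_gcd hk.ne' hN, factorization_div hpk]
  simp only [Finsupp.tsub_apply, hp.factorization, Finsupp.single_apply]
  split_ifs with hpr
  · subst hpr; omega
  · omega

theorem factorization_of_isLeast_div_gcd {N t L : ℕ} (hN : N ≠ 0)
    (hL : IsLeast {k | 0 < k ∧ k / k.gcd N = t} L) (p : ℕ) :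
    L.factorization p =
      if t.factorization p = 0 then 0 else t.factorization p + N.factorization p := by
  obtain ⟨⟨hL0, rfl⟩, hmin⟩ := hL
  rw [factorization_div_gcd hL0.ne' hN, Finsupp.tsub_apply]
  split_ifs with ht
  · by_contra hLp
    have hp : p.Prime := prime_of_mem_primeFactors (Finsupp.mem_support_iff.mpr hLp)
    have hpL : p ∣ L := dvd_of_factorization_pos hLp
    have hsmaller : L ≤ L / p :=
      hmin ⟨Nat.div_pos (Nat.le_of_dvd hL0 hpL) hp.pos,
        div_prime_div_gcd_eq hp hL0 hN hpL (by omega)⟩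
    exact absurd hsmaller (not_le.mpr (Nat.div_lt_self hL0 hp.one_lt))
  · omega

end Nat

def valuationStep (a b x : ℕ) : ℕ := if x ≤ a then 0 else x - a + b

theorem factorization_of_isLeast_transfer {M N l l' : ℕ} (hM : M ≠ 0) (hN : N ≠ 0)
    (hl : l ≠ 0)
    (h : IsLeast {k | 0 < k ∧ k / k.gcd N = l / l.gcd M} l') (p : ℕ) :
    l'.factorization p =
      valuationStep (M.factorization p) (N.factorization p) (l.factorization p) := by
  rw [Nat.factorization_of_isLeast_div_gcd hN h, Nat.factorization_div_gcd hl hM,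
    Finsupp.tsub_apply, valuationStep]
  split_ifs <;> omega

theorem factorization_eq_valuationStep_iterate {M N : ℕ} (hM : M ≠ 0) (hN : N ≠ 0)
    {l : ℕ → ℕ} (hpos : ∀ j, 0 < l j)
    (hstep : ∀ j, IsLeast {k | 0 < k ∧ k / k.gcd N = l j / (l j).gcd M} (l (j + 1)))
    (p i : ℕ) :
    (l i).factorization p =
      (valuationStep (M.factorization p) (N.factorization p))^[i] ((l 0).factorization p) := by
  induction i with
  | zero => rfl
  | succ i ih =>
    rw [factorization_of_isLeast_transfer hM hN (hpos i).ne' (hstep i), ih,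
      Function.iterate_succ_apply']

section ValuationStep

variable {a b x : ℕ}

theorem valuationStep_iterate_eq_zero_of_le (hx : x ≤ a) {j : ℕ} (hj : 1 ≤ j) :
    (valuationStep a b)^[j] x = 0 := by
  obtain ⟨i, rfl⟩ := Nat.exists_eq_add_of_le' hj
  rw [Function.iterate_succ_apply,
    show valuationStep a b x = 0 from if_pos hx]
  exact Function.iterate_fixed (by simp [valuationStep]) i

theorem valuationStep_iterate_of_lt (hx : a < x) (j : ℕ) : (valuationStep a a)^[j] x = x :=
  Function.iterate_fixed (by rw [valuationStep, if_neg hx.not_ge]; omega) j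

theorem valuationStep_iterate_le_sub (hba : b < a) (x j : ℕ) :
    (valuationStep a b)^[j] x ≤ x - j := by
  induction j with
  | zero => simp
  | succ j ih =>
    rw [Function.iterate_succ_apply', valuationStep]
    split_ifs <;> omega

theorem valuationStep_iterate_eq_zero_of_lt (hba : b < a) {j : ℕ} (hj : x ≤ j) :
    (valuationStep a b)^[j] x = 0 := by
  have := valuationStep_iterate_le_sub hba x j
  omega

end ValuationStep

/-- Claim on label sequences: for `|m|, |n| ≥ 2` and a finite `(m,n)`-phenotype `q`,
any sequence `(l_j)` of positive integers such that the valuations of `l_0` are as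
prescribed and `l_{j+1}` is the smallest positive solution of the transfer equation
`l_{j+1}/gcd(l_{j+1},|n|) = l_j/gcd(l_j,|m|)` is eventually constant equal to `q`. -/
theorem label_sequence_eventually_phenotype (m n : ℤ)
    (hm : 2 ≤ m.natAbs) (hn : 2 ≤ n.natAbs)
    (q : ℕ) (hq : 1 ≤ q)
    (hqph : ∀ p : ℕ, p.Prime → p ∣ q →
      m.natAbs.factorization p = n.natAbs.factorization p ∧
        n.natAbs.factorization p < q.factorization p)
    (l : ℕ → ℕ) (hpos : ∀ j, 0 < l j)
    (h0lt : ∀ p : ℕ, p.Prime →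
      m.natAbs.factorization p < n.natAbs.factorization p →
      (l 0).factorization p = m.natAbs.factorization p)
    (h0eq : ∀ p : ℕ, p.Prime →
      m.natAbs.factorization p = n.natAbs.factorization p →
      (l 0).factorization p = max (q.factorization p) (m.natAbs.factorization p))
    (hstep : ∀ j : ℕ, IsLeast {k : ℕ | 0 < k ∧
      k / Nat.gcd k n.natAbs = l j / Nat.gcd (l j) m.natAbs} (l (j + 1))) :
    ∃ r : ℕ, ∀ j : ℕ, r ≤ j → l j = q := by
  refine ⟨l 0, fun j hj => Nat.eq_of_factorization_eq (hpos j).ne' (by omega) fun p => ?_⟩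
  by_cases hp : p.Prime
  swap
  · simp only [Nat.factorization_eq_zero_of_not_prime _ hp]
  have hj1 : 1 ≤ j := (hpos 0).trans_le hj
  have hl0j : (l 0).factorization p ≤ j := (Nat.factorization_lt p (hpos 0).ne').le.trans hj
  rw [factorization_eq_valuationStep_iterate (by omega) (by omega) hpos hstep]
  specialize hqph p hp
  specialize h0lt p hp
  specialize h0eq p hp
  generalize m.natAbs.factorization p = a at *
  generalize n.natAbs.factorization p = b at *
  generalize (l 0).factorization p = x at *
  have hq0 (hab : a ≠ b) : q.factorization p = 0 :=
    Nat.factorization_eq_zero_of_not_dvd fun hpq => hab (hqph hpq).1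
  rcases lt_trichotomy a b with hab | rfl | hab
  · rw [valuationStep_iterate_eq_zero_of_le (h0lt hab).le hj1, hq0 hab.ne]
  · by_cases hpq : p ∣ q
    · have haq := (hqph hpq).2
      rw [h0eq rfl, max_eq_left haq.le, valuationStep_iterate_of_lt haq]
    · have hqp := Nat.factorization_eq_zero_of_not_dvd hpq
      rw [hqp, valuationStep_iterate_eq_zero_of_le (by simp [h0eq rfl, hqp]) hj1]
  · rw [valuationStep_iterate_eq_zero_of_lt hab hl0j, hq0 hab.ne']
end
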